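/- Let x(t) = ∑_{p=0}^{P−1} φ_p(t)·exp(−i ω_p t) be a multiband signal with P ≥ 1 distinct frequencies Ω_C = {ω_0, …, ω_{P−1}} and baseband bandwidth parameter Ω_B > 0, and let x[k] = x(k·T_S). If the sampling period satisfies T_S < 1/(2^P·Ω_B·e) (in particular T_S ≤ 1/(2·Ω_B·e)), then the filtered amplitudes shrink to zero with the filter order: sup_{k ∈ ℤ} |(Ψ_{Ω_C}^N ∗ x[·])[k]| → 0 as N → ∞. (The decay remark following Lemma 1.) -/

import Mathlib

/-!
By Fourier inversion the samples are superpositions of discrete exponentials,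
`x[k] = ∑ₚ ∫ 𝓕φₚ(ξ) exp(i θₚ(ξ) k) dξ` with `θₚ(ξ) = (2πξ - ωₚ) T`. A discrete exponential of
frequency `θ` is an eigensequence of every finitely supported filter `h`, with eigenvalue the
transfer function `dtft h θ`, which is multiplicative under convolution. For `h = Ψᴺ` it equals
`(∏_q (exp(-i(ω_q T + θ)) - 1))ᴺ`; on the band `|2πξ| ≤ Ω_B` the factor `q = p` at `θ = θₚ(ξ)` is
`exp(-2πiξT) - 1`, of modulus at most `Ω_B T`, and the others have modulus at most `2`. So the
filtered samples are bounded uniformly in `k` by `(Ω_B T 2^(P-1))ᴺ ∑ₚ ‖𝓕φₚ‖₁`, and the sampling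
condition makes `Ω_B T 2^(P-1) < 1`.
-/

noncomputable section

open scoped BigOperators

/-- Kronecker delta sequence. -/
def delta : ℤ → ℂ := fun k => if k = 0 then 1 else 0

/-- Discrete convolution of sequences: `(a ∗ b)[k] = ∑ₙ a[n]·b[k−n]`. -/
def conv (a b : ℤ → ℂ) : ℤ → ℂ := fun k => ∑' n : ℤ, a n * b (k - n)

/-- `N`-fold convolution power (`convPow a 0` is the unit `delta`). -/
def convPow (a : ℤ → ℂ) : ℕ → ℤ → ℂ
  | 0 => delta
  | n + 1 => conv a (convPow a n)

/-- Two-tap modulated filter `ψ = [-1, exp(-i ω T)]`. -/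
def psi (w T : ℝ) : ℤ → ℂ := fun k =>
  if k = 0 then -1 else if k = 1 then Complex.exp (-(Complex.I * (w : ℂ) * (T : ℂ))) else 0

/-- Multiband filter `Ψ = ψ₀ ∗ ψ₁ ∗ ⋯` over a list of frequencies. -/
def PsiL (ws : List ℝ) (T : ℝ) : ℤ → ℂ :=
  (ws.map fun w => psi w T).foldr conv delta

/-- First difference filter `Δ = [-1, 1]`. -/
def Delta : ℤ → ℂ := fun k => if k = 0 then -1 else if k = 1 then 1 else 0

/-- Fourier transform in angular frequency: `f̂(ω) = ∫ exp(-i ω t) f(t) dt`. -/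
def angFourier (f : ℝ → ℂ) (w : ℝ) : ℂ :=
  ∫ t : ℝ, Complex.exp (-(Complex.I * (w : ℂ) * (t : ℂ))) * f t

/-- Centered modulo `M_λ : ℝ → [-λ, λ)`. -/
def mod1 (lam t : ℝ) : ℝ := t - 2 * lam * (⌊(t + lam) / (2 * lam)⌋ : ℝ)

/-- Centered modulo on ℂ, applied componentwise. -/
def cmod (lam : ℝ) (z : ℂ) : ℂ := (mod1 lam z.re : ℂ) + (mod1 lam z.im : ℂ) * Complex.I

/-- Elementary symmetric polynomial of degree `k` in variables `z 0, …, z (P-1)`. -/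
def esymmC {P : ℕ} (z : Fin P → ℂ) (k : ℕ) : ℂ :=
  ∑ S ∈ Finset.univ.powersetCard k, ∏ i ∈ S, z i

open MeasureTheory Complex Function Real
open scoped FourierTransform Pointwise

def dtft (a : ℤ → ℂ) (θ : ℝ) : ℂ := ∑' n : ℤ, a n * cexp (-(I * θ * n))

lemma conv_eq_sum {a : ℤ → ℂ} {s : Finset ℤ} (ha : support a ⊆ s) (f : ℤ → ℂ) (k : ℤ) :
    conv a f k = ∑ n ∈ s, a n * f (k - n) :=
  tsum_eq_sum' ((support_mul_subset_left _ _).trans ha)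

lemma dtft_eq_sum {a : ℤ → ℂ} {s : Finset ℤ} (ha : support a ⊆ s) (θ : ℝ) :
    dtft a θ = ∑ n ∈ s, a n * cexp (-(I * θ * n)) :=
  tsum_eq_sum' ((support_mul_subset_left _ _).trans ha)

lemma support_conv_subset (a b : ℤ → ℂ) : support (conv a b) ⊆ support a + support b := by
  intro k hk
  obtain ⟨n, hn⟩ : ∃ n, a n * b (k - n) ≠ 0 := by
    by_contra! h
    exact hk (by simp [conv, h])
  exact ⟨n, left_ne_zero_of_mul hn, k - n, right_ne_zero_of_mul hn, add_sub_cancel _ _⟩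

lemma support_delta_subset : support delta ⊆ {0} := fun k hk => by simpa [delta] using hk

lemma support_psi_subset (w T : ℝ) : support (psi w T) ⊆ {0, 1} := fun k hk => by
  by_contra h
  simp only [Set.mem_insert_iff, Set.mem_singleton_iff, not_or] at h
  simp [psi, h.1, h.2] at hk

lemma finite_support_delta : (support delta).Finite :=
  (Set.finite_singleton 0).subset support_delta_subset

lemma finite_support_psi (w T : ℝ) : (support (psi w T)).Finite :=
  (Set.toFinite _).subset (support_psi_subset w T)

lemma finite_support_conv {a b : ℤ → ℂ} (ha : (support a).Finite) (hb : (support b).Finite) :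
    (support (conv a b)).Finite :=
  (ha.add hb).subset (support_conv_subset a b)

lemma finite_support_PsiL (ws : List ℝ) (T : ℝ) : (support (PsiL ws T)).Finite := by
  induction ws with
  | nil => exact finite_support_delta
  | cons w ws ih => exact finite_support_conv (finite_support_psi w T) ih

lemma finite_support_convPow {a : ℤ → ℂ} (ha : (support a).Finite) (N : ℕ) :
    (support (convPow a N)).Finite := by
  induction N with
  | zero => exact finite_support_delta
  | succ N ih => exact finite_support_conv ha ih

lemma conv_finsetSum {h : ℤ → ℂ} (hh : (support h).Finite) {ι : Type*} (s : Finset ι)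
    (f : ι → ℤ → ℂ) (k : ℤ) : conv h (fun k => ∑ i ∈ s, f i k) k = ∑ i ∈ s, conv h (f i) k := by
  simp_rw [conv_eq_sum hh.coe_toFinset.superset, Finset.mul_sum]
  exact Finset.sum_comm

lemma conv_exp (a : ℤ → ℂ) (θ : ℝ) (k : ℤ) :
    conv a (fun k : ℤ => cexp (I * θ * k)) k = dtft a θ * cexp (I * θ * k) := by
  rw [conv, dtft, ← tsum_mul_right]
  refine tsum_congr fun n => ?_
  rw [mul_assoc (a n), ← Complex.exp_add]
  push_cast
  ring_nf

lemma dtft_delta (θ : ℝ) : dtft delta θ = 1 := by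
  rw [dtft_eq_sum (s := {0}) (by simpa using support_delta_subset)]
  simp [delta]

lemma dtft_psi (w T θ : ℝ) : dtft (psi w T) θ = cexp (-(I * (w * T + θ))) - 1 := by
  rw [dtft_eq_sum (s := {0, 1}) (by simpa using support_psi_subset w T)]
  simp [psi, ← Complex.exp_add]
  ring_nf

lemma dtft_conv {a b : ℤ → ℂ} (ha : (support a).Finite) (hb : (support b).Finite) (θ : ℝ) :
    dtft (conv a b) θ = dtft a θ * dtft b θ := by
  set s := ha.toFinset
  set t := hb.toFinset
  have hs : support a ⊆ s := ha.coe_toFinset.superset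
  have hst : support (conv a b) ⊆ ↑(s + t) := by
    rw [Finset.coe_add, ha.coe_toFinset, hb.coe_toFinset]
    exact support_conv_subset a b
  have hshift : ∀ n ∈ s, cexp (-(I * θ * n)) * dtft b θ
      = ∑ m ∈ s + t, b (m - n) * cexp (-(I * θ * m)) := fun n hn => by
    have hexp : ∀ m : ℤ, cexp (-(I * θ * n)) * (b (m - n) * cexp (-(I * θ * ↑(m - n))))
        = b (m - n) * cexp (-(I * θ * m)) := fun m => by
      rw [mul_left_comm, ← Complex.exp_add]
      push_cast
      ring_nf
    rw [dtft, ← (Equiv.subRight n).tsum_eq, ← tsum_mul_left]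
    simp_rw [Equiv.subRight_apply, hexp]
    exact tsum_eq_sum' fun m hm => Finset.mem_add.2
      ⟨n, hn, m - n, hb.mem_toFinset.2 (left_ne_zero_of_mul hm), add_sub_cancel _ _⟩
  calc dtft (conv a b) θ
      = ∑ m ∈ s + t, ∑ n ∈ s, a n * b (m - n) * cexp (-(I * θ * m)) := by
        simp_rw [dtft_eq_sum hst, conv_eq_sum hs, Finset.sum_mul]
    _ = ∑ n ∈ s, a n * (cexp (-(I * θ * n)) * dtft b θ) := by
        rw [Finset.sum_comm]
        refine Finset.sum_congr rfl fun n hn => ?_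
        rw [hshift n hn, Finset.mul_sum]
        simp_rw [mul_assoc]
    _ = dtft a θ * dtft b θ := by
        simp_rw [dtft_eq_sum hs, Finset.sum_mul, mul_assoc]

lemma dtft_PsiL (ws : List ℝ) (T θ : ℝ) :
    dtft (PsiL ws T) θ = (ws.map fun w => dtft (psi w T) θ).prod := by
  induction ws with
  | nil => exact dtft_delta θ
  | cons w ws ih =>
    rw [List.map_cons, List.prod_cons, ← ih]
    exact dtft_conv (finite_support_psi w T) (finite_support_PsiL ws T) θ

lemma dtft_convPow {a : ℤ → ℂ} (ha : (support a).Finite) (N : ℕ) (θ : ℝ) :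
    dtft (convPow a N) θ = dtft a θ ^ N := by
  induction N with
  | zero => exact dtft_delta θ
  | succ N ih => rw [pow_succ', ← ih]; exact dtft_conv ha (finite_support_convPow ha N) θ

lemma norm_dtft_PsiL_ofFn_le {P : ℕ} (ω : Fin P → ℝ) {T : ℝ} (hT : 0 ≤ T) (p : Fin P)
    (ν : ℝ) : ‖dtft (PsiL (List.ofFn ω) T) ((ν - ω p) * T)‖ ≤ |ν| * T * 2 ^ (P - 1) := by
  have hown : ‖dtft (psi (ω p) T) ((ν - ω p) * T)‖ ≤ |ν| * T := by
    have : -(I * (ω p * T + ((ν - ω p) * T : ℝ))) = I * (-(ν * T) : ℝ) := by push_cast; ring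
    rw [dtft_psi, this]
    refine Real.norm_exp_I_mul_ofReal_sub_one_le.trans_eq ?_
    rw [norm_neg, Real.norm_eq_abs, abs_mul, abs_of_nonneg hT]
  have hother : ∀ q, ‖dtft (psi (ω q) T) ((ν - ω p) * T)‖ ≤ 2 := fun q => by
    rw [dtft_psi]
    refine (norm_sub_le _ _).trans_eq ?_
    norm_num [Complex.norm_exp]
  rw [dtft_PsiL, List.map_ofFn, List.prod_ofFn, norm_prod,
    ← Finset.mul_prod_erase _ _ (Finset.mem_univ p)]
  refine mul_le_mul hown ?_ (by positivity) (by positivity)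
  calc ∏ q ∈ Finset.univ.erase p, ‖dtft (psi (ω q) T) ((ν - ω p) * T)‖
      ≤ ∏ q ∈ Finset.univ.erase p, (2 : ℝ) :=
        Finset.prod_le_prod (fun _ _ => norm_nonneg _) fun q _ => hother q
    _ = 2 ^ (P - 1) := by simp [Finset.card_erase_of_mem]

section

variable {α : Type*} [MeasurableSpace α] {μ : Measure α}

lemma MeasureTheory.Integrable.mul_exp_I_mul {G : α → ℂ} (hG : Integrable G μ) {θ : α → ℝ}
    (hθ : Measurable θ) (k : ℤ) : Integrable (fun ξ => G ξ * cexp (I * θ ξ * k)) μ :=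
  hG.mul_bdd (c := 1) (by fun_prop : Measurable _).aestronglyMeasurable
    (ae_of_all _ fun ξ => by simp [Complex.norm_exp])

lemma conv_integral_exp {h : ℤ → ℂ} (hh : (support h).Finite) {G : α → ℂ}
    (hG : Integrable G μ) {θ : α → ℝ} (hθ : Measurable θ) (k : ℤ) :
    conv h (fun k : ℤ => ∫ ξ, G ξ * cexp (I * θ ξ * k) ∂μ) k
      = ∫ ξ, G ξ * dtft h (θ ξ) * cexp (I * θ ξ * k) ∂μ := by
  have hs := hh.coe_toFinset.superset
  calc conv h (fun k : ℤ => ∫ ξ, G ξ * cexp (I * θ ξ * k) ∂μ) k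
      = ∑ n ∈ hh.toFinset, ∫ ξ, h n * (G ξ * cexp (I * θ ξ * (k - n : ℤ))) ∂μ := by
        simp_rw [conv_eq_sum hs, integral_const_mul]
    _ = ∫ ξ, G ξ * conv h (fun k : ℤ => cexp (I * θ ξ * k)) k ∂μ := by
        rw [← integral_finsetSum _ fun n _ => (hG.mul_exp_I_mul hθ _).const_mul (h n)]
        refine integral_congr_ae (ae_of_all _ fun ξ => ?_)
        simp only [conv_eq_sum hs, Finset.mul_sum]
        exact Finset.sum_congr rfl fun n _ => by ring
    _ = _ := by simp_rw [conv_exp, mul_assoc]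

lemma norm_conv_integral_exp_le {h : ℤ → ℂ} (hh : (support h).Finite) {G : α → ℂ}
    (hG : Integrable G μ) {θ : α → ℝ} (hθ : Measurable θ) {r : ℝ}
    (hr : ∀ ξ, G ξ ≠ 0 → ‖dtft h (θ ξ)‖ ≤ r) (k : ℤ) :
    ‖conv h (fun k : ℤ => ∫ ξ, G ξ * cexp (I * θ ξ * k) ∂μ) k‖ ≤ r * ∫ ξ, ‖G ξ‖ ∂μ := by
  rw [conv_integral_exp hh hG hθ, ← integral_const_mul]
  refine norm_integral_le_of_norm_le (hG.norm.const_mul r) (ae_of_all _ fun ξ => ?_)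
  rcases eq_or_ne (G ξ) 0 with hξ | hξ
  · simp [hξ]
  · simpa [Complex.norm_exp, mul_comm r] using
      mul_le_mul_of_nonneg_left (hr ξ hξ) (norm_nonneg (G ξ))

end

lemma fourier_eq_angFourier (f : ℝ → ℂ) (ξ : ℝ) : 𝓕 f ξ = angFourier f (2 * π * ξ) := by
  rw [Real.fourier_real_eq_integral_exp_smul, angFourier]
  congr 1; ext t
  rw [smul_eq_mul]; congr 2; push_cast; ring

lemma abs_two_pi_mul_le_of_fourier_ne_zero {f : ℝ → ℂ} {ΩB : ℝ}
    (hband : ∀ w : ℝ, ΩB < |w| → angFourier f w = 0) {ξ : ℝ} (hξ : 𝓕 f ξ ≠ 0) :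
    |2 * π * ξ| ≤ ΩB :=
  not_lt.1 fun h => hξ (fourier_eq_angFourier f ξ ▸ hband _ h)

lemma support_fourier_subset_closedBall {f : ℝ → ℂ} {ΩB : ℝ}
    (hband : ∀ w : ℝ, ΩB < |w| → angFourier f w = 0) :
    support (𝓕 f) ⊆ Metric.closedBall 0 (ΩB / (2 * π)) := fun ξ hξ => by
  rw [mem_closedBall_zero_iff, Real.norm_eq_abs, le_div_iff₀' two_pi_pos,
    ← abs_of_pos two_pi_pos, ← abs_mul]
  exact abs_two_pi_mul_le_of_fourier_ne_zero hband hξ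

lemma MeasureTheory.Integrable.integrable_fourier_of_support_subset {f : ℝ → ℂ}
    (hf : Integrable f) {R : ℝ} (hR : support (𝓕 f) ⊆ Metric.closedBall 0 R) :
    Integrable (𝓕 f) :=
  (VectorFourier.fourierIntegral_continuous Real.continuous_fourierChar continuous_inner
    hf).integrable_of_hasCompactSupport
    (HasCompactSupport.intro (isCompact_closedBall 0 R) fun _ hξ => notMem_support.1 (hξ ∘ (hR ·)))

lemma Continuous.sample_mul_exp_eq_integral_fourier {f : ℝ → ℂ} (hc : Continuous f)
    (hf : Integrable f) (hFf : Integrable (𝓕 f)) (w T : ℝ) (k : ℤ) :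
    f (k * T) * cexp (-(I * w * (k * T : ℝ)))
      = ∫ ξ, 𝓕 f ξ * cexp (I * ((2 * π * ξ - w) * T : ℝ) * k) := by
  conv_lhs => rw [← hc.fourierInv_fourier_eq hf hFf, Real.fourierInv_eq', ← integral_mul_const]
  refine integral_congr_ae (ae_of_all _ fun ξ => ?_)
  dsimp only
  rw [smul_eq_mul, mul_comm (cexp _), mul_assoc, ← Complex.exp_add]
  congr 2
  push_cast [RCLike.inner_apply, conj_trivial]
  ring

lemma mul_two_pow_pred_lt_one {P : ℕ} {ΩB T : ℝ} (hΩB : 0 < ΩB) (hT : 0 < T)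
    (hTS : T < 1 / (2 ^ P * ΩB * Real.exp 1)) : ΩB * T * 2 ^ (P - 1) < 1 := calc
  ΩB * T * 2 ^ (P - 1) ≤ ΩB * T * 2 ^ P := by gcongr; exacts [one_le_two, P.sub_le 1]
  _ ≤ ΩB * T * 2 ^ P * Real.exp 1 :=
    le_mul_of_one_le_right (by positivity) (Real.one_le_exp zero_le_one)
  _ = T * (2 ^ P * ΩB * Real.exp 1) := by ring
  _ < 1 := (lt_div_iff₀ (by positivity)).1 hTS

theorem filtered_amplitudes_decay_general {P : ℕ} (ω : Fin P → ℝ)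
    (ΩB T : ℝ) (hΩB : 0 < ΩB) (hT : 0 < T)
    (hTS : T < 1 / (2 ^ P * ΩB * Real.exp 1))
    (φ : Fin P → ℝ → ℂ)
    (hcont : ∀ p, Continuous (φ p))
    (hint : ∀ p, MeasureTheory.Integrable (φ p))
    (hband : ∀ p, ∀ w : ℝ, ΩB < |w| → angFourier (φ p) w = 0)
    (x : ℝ → ℂ)
    (hx : ∀ t : ℝ, x t = ∑ p, φ p t * Complex.exp (-(Complex.I * (ω p : ℂ) * (t : ℂ))))
    (xs : ℤ → ℂ) (hxs : ∀ k : ℤ, xs k = x (k * T)) :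
    Filter.Tendsto
      (fun N : ℕ => ⨆ k : ℤ, ‖conv (convPow (PsiL (List.ofFn ω) T) N) xs k‖)
      Filter.atTop (nhds 0) := by
  have hFint : ∀ p, Integrable (𝓕 (φ p)) := fun p =>
    (hint p).integrable_fourier_of_support_subset (support_fourier_subset_closedBall (hband p))
  have hsamples : xs = fun k : ℤ =>
      ∑ p, ∫ ξ, 𝓕 (φ p) ξ * cexp (I * ((2 * π * ξ - ω p) * T : ℝ) * k) := funext fun k => by
    rw [hxs, hx]
    exact Finset.sum_congr rfl fun p _ =>
      (hcont p).sample_mul_exp_eq_integral_fourier (hint p) (hFint p) _ _ _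
  have hbound : ∀ N k, ‖conv (convPow (PsiL (List.ofFn ω) T) N) xs k‖
      ≤ (ΩB * T * 2 ^ (P - 1)) ^ N * ∑ p, ∫ ξ, ‖𝓕 (φ p) ξ‖ := fun N k => by
    have hΨN := finite_support_convPow (finite_support_PsiL (List.ofFn ω) T) N
    rw [hsamples, conv_finsetSum hΨN, Finset.mul_sum]
    refine (norm_sum_le _ _).trans (Finset.sum_le_sum fun p _ =>
      norm_conv_integral_exp_le hΨN (hFint p) (by fun_prop) (fun ξ hξ => ?_) k)
    rw [dtft_convPow (finite_support_PsiL _ T), norm_pow]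
    refine pow_le_pow_left₀ (norm_nonneg _) ((norm_dtft_PsiL_ofFn_le ω hT.le p _).trans ?_) N
    gcongr
    exact abs_two_pi_mul_le_of_fourier_ne_zero (hband p) hξ
  refine squeeze_zero (fun N => Real.iSup_nonneg fun k => norm_nonneg _)
    (fun N => Real.iSup_le (hbound N) (by positivity)) ?_
  simpa using (tendsto_pow_atTop_nhds_zero_of_lt_one (by positivity)
    (mul_two_pow_pred_lt_one hΩB hT hTS)).mul_const (∑ p, ∫ ξ, ‖𝓕 (φ p) ξ‖)

/-- The decay remark following Lemma 1: under the multiband sampling condition,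
the filtered amplitudes shrink to zero as the filter order grows. -/
theorem filtered_amplitudes_decay {P : ℕ} (hP : 1 ≤ P) (ω : Fin P → ℝ)
    (hω : Function.Injective ω) (ΩB T : ℝ) (hΩB : 0 < ΩB) (hT : 0 < T)
    (hTS : T < 1 / (2 ^ P * ΩB * Real.exp 1))
    (φ : Fin P → ℝ → ℂ)
    (hcont : ∀ p, Continuous (φ p))
    (hbdd : ∀ p, ∃ M : ℝ, ∀ t : ℝ, ‖φ p t‖ ≤ M)
    (hint : ∀ p, MeasureTheory.Integrable (φ p))
    (hband : ∀ p, ∀ w : ℝ, ΩB < |w| → angFourier (φ p) w = 0)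
    (x : ℝ → ℂ)
    (hx : ∀ t : ℝ, x t = ∑ p, φ p t * Complex.exp (-(Complex.I * (ω p : ℂ) * (t : ℂ))))
    (xs : ℤ → ℂ) (hxs : ∀ k : ℤ, xs k = x (k * T)) :
    Filter.Tendsto
      (fun N : ℕ => ⨆ k : ℤ, ‖conv (convPow (PsiL (List.ofFn ω) T) N) xs k‖)
      Filter.atTop (nhds 0) :=
  filtered_amplitudes_decay_general ω ΩB T hΩB hT hTS φ hcont hint hband x hx xs hxs

end
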